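/- arXiv:2504.02944 — 2 statements merged into one kernel-verified Lean document; each statement's English description precedes it below -/
import Mathlib

section
/- Let d ≥ 1 and n ≥ 1, and for each y ∈ Fin n let (M_{b|y})_{b ∈ Fin d} be positive semidefinite Hermitian d×d complex matrices satisfying Tr(M_{b|y} M_{b'|y}) = 1 if b = b' and 0 if b ≠ b', Tr(M_{b|y} M_{b'|y'}) = 1/d whenever y ≠ y', and ∑_{b} M_{b|y} = 1 for every y (a collection of measurements in mutually unbiased bases). For η ∈ (0,1], define the noisy multi-measurement M^η by M^η_{b|y} := η • M_{b|y} + (1−η) • (1/d) • 1. Then M^η is classical (as a multi-measurement) if and only if the measurements in M^η are jointly measurable, i.e. there exist a finite index set Λ, positive semidefinite matrices G_λ with ∑_λ G_λ = 1, and reals p_λ(b,y) ≥ 0 with ∑_{b ∈ Fin d} p_λ(b,y) = 1 for every y and λ, such that M^η_{b|y} = ∑_λ p_λ(b,y) • G_λ for all b,y. -/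
open Matrix BigOperators
open scoped ComplexOrder

noncomputable section

/-- The noncontextual measurement-assignment polytope of a multi-measurement. -/
def multiPolytope {d : ℕ} {B Y : Type*} [Fintype B] [Fintype Y]
    (M : B × Y → Matrix (Fin d) (Fin d) ℂ) : Set (B × Y → ℝ) :=
  {q | (∀ p, 0 ≤ q p) ∧ (∀ y : Y, ∑ b : B, q (b, y) = 1) ∧
    ∀ β : B × Y → ℝ, (∑ p : B × Y, β p • M p = 0) → (∑ p : B × Y, β p * q p = 0)}

/-- A multi-measurement is classical. -/
def IsClassicalMulti {d : ℕ} {B Y : Type*} [Fintype B] [Fintype Y]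
    (M : B × Y → Matrix (Fin d) (Fin d) ℂ) : Prop :=
  ∃ (n : ℕ) (G : Fin n → Matrix (Fin d) (Fin d) ℂ) (q : Fin n → B × Y → ℝ),
    (∀ l, (G l).PosSemidef) ∧ (∑ l, G l = 1) ∧
    (∀ l, q l ∈ multiPolytope M) ∧
    (∀ b : B, ∀ y : Y, M (b, y) = ∑ l, q l (b, y) • G l)

/-- A multi-measurement is jointly measurable (its measurements are compatible): it is
obtained by classical postprocessing of a single parent POVM. -/
def JointlyMeasurable {d : ℕ} {B Y : Type*} [Fintype B] [Fintype Y]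
    (M : B × Y → Matrix (Fin d) (Fin d) ℂ) : Prop :=
  ∃ (n : ℕ) (G : Fin n → Matrix (Fin d) (Fin d) ℂ) (p : Fin n → B × Y → ℝ),
    (∀ l, (G l).PosSemidef) ∧ (∑ l, G l = 1) ∧
    (∀ l, ∀ q : B × Y, 0 ≤ p l q) ∧
    (∀ l, ∀ y : Y, ∑ b : B, p l (b, y) = 1) ∧
    (∀ b : B, ∀ y : Y, M (b, y) = ∑ l, p l (b, y) • G l)

/-!
Joint measurability is classicality without the requirement that each response function respect
every linear relation `∑ β(b,y) M^η_{b|y} = 0`. For noisy mutually unbiased bases every such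
relation is harmless: all effects have trace one, so `∑ β = 0`, which cancels the noise term and
leaves `∑ β(b,y) M_{b|y} = 0`. Pairing this with `M_{b|y}` under the trace gives
`β(b,y) = (∑_{b'} β(b',y)) / d`, so for any normalized `q` we get `∑ β q = (∑ β) / d = 0`.
-/

open Finset

section MultiMeasurement

variable {d : ℕ} {B Y : Type*} [Fintype B] [Fintype Y]

theorem IsClassicalMulti.jointlyMeasurable {M : B × Y → Matrix (Fin d) (Fin d) ℂ}
    (h : IsClassicalMulti M) : JointlyMeasurable M := by
  obtain ⟨m, G, q, hG, hG1, hq, hM⟩ := h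
  exact ⟨m, G, q, hG, hG1, fun l => (hq l).1, fun l => (hq l).2.1, hM⟩

theorem JointlyMeasurable.isClassicalMulti {M : B × Y → Matrix (Fin d) (Fin d) ℂ}
    (h : JointlyMeasurable M)
    (hker : ∀ β : B × Y → ℝ, ∑ p, β p • M p = 0 → ∀ q : B × Y → ℝ,
      (∀ y, ∑ b, q (b, y) = 1) → ∑ p, β p * q p = 0) :
    IsClassicalMulti M := by
  obtain ⟨m, G, q, hG, hG1, hq0, hq1, hM⟩ := h
  exact ⟨m, G, q, hG, hG1, fun l => ⟨hq0 l, hq1 l, fun β hβ => hker β hβ (q l) (hq1 l)⟩, hM⟩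

theorem sum_mul_eq_sum_of_apply_eq {β q : B × Y → ℝ} {c : Y → ℝ}
    (hβ : ∀ b y, β (b, y) = c y) (hq : ∀ y, ∑ b, q (b, y) = 1) :
    ∑ p, β p * q p = ∑ y, c y := by
  rw [Fintype.sum_prod_type_right]
  refine sum_congr rfl fun y _ => ?_
  simp_rw [hβ, ← mul_sum, hq, mul_one]

end MultiMeasurement

theorem sum_eq_zero_of_sum_smul_eq_zero_of_trace_eq_one {ι m : Type*} [Fintype ι] [Fintype m]
    {N : ι → Matrix m m ℂ} (hN : ∀ i, (N i).trace = 1) {β : ι → ℝ}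
    (hβ : ∑ i, β i • N i = 0) : ∑ i, β i = 0 := by
  have h := congrArg trace hβ
  simp only [trace_sum, trace_smul, hN, Complex.real_smul, mul_one, trace_zero] at h
  exact_mod_cast h

section Noisy

variable {d : ℕ} {B Y : Type*}

/-- The paper's `M^η`, indexed by outcome–setting pairs `(b, y)` like the polytope. -/
def noisyMulti (M : Y → B → Matrix (Fin d) (Fin d) ℂ) (η : ℝ) (p : B × Y) :
    Matrix (Fin d) (Fin d) ℂ :=
  η • M p.2 p.1 + ((1 - η) * (d : ℝ)⁻¹) • 1

variable {M : Y → B → Matrix (Fin d) (Fin d) ℂ} {η : ℝ}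

theorem trace_noisyMulti (hd : d ≠ 0) (hM : ∀ y b, (M y b).trace = 1) (p : B × Y) :
    (noisyMulti M η p).trace = 1 := by
  simp only [noisyMulti, trace_add, trace_smul, hM, trace_one, Fintype.card_fin, Complex.real_smul]
  push_cast
  field_simp
  ring

variable [Fintype B] [Fintype Y]

theorem sum_smul_noisyMulti (β : B × Y → ℝ) :
    ∑ p, β p • noisyMulti M η p =
      η • ∑ p, β p • M p.2 p.1 + ((∑ p, β p) * ((1 - η) * (d : ℝ)⁻¹)) • 1 := by
  simp only [noisyMulti, smul_add, smul_smul, sum_add_distrib, smul_sum, ← sum_smul]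
  congr 2
  · funext p
    rw [mul_comm]
  · rw [sum_mul]

theorem sum_smul_eq_zero_of_sum_smul_noisyMulti_eq_zero (hη : η ≠ 0) {β : B × Y → ℝ}
    (hβ : ∑ p, β p • noisyMulti M η p = 0) (hsum : ∑ p, β p = 0) :
    ∑ p, β p • M p.2 p.1 = 0 := by
  rw [sum_smul_noisyMulti, hsum, zero_mul, zero_smul, add_zero] at hβ
  exact (smul_eq_zero.mp hβ).resolve_left hη

end Noisy

section MutuallyUnbiased

variable {d : ℕ} {B Y : Type*} [Fintype B] [DecidableEq B] {M : Y → B → Matrix (Fin d) (Fin d) ℂ}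

theorem trace_eq_one_of_orthonormal
    (horth : ∀ y b b', (M y b * M y b').trace = if b = b' then 1 else 0)
    (hcomplete : ∀ y, ∑ b, M y b = 1) (y : Y) (b : B) : (M y b).trace = 1 := by
  calc (M y b).trace = (M y b * ∑ b', M y b').trace := by rw [hcomplete, mul_one]
    _ = ∑ b', if b = b' then 1 else 0 := by rw [mul_sum, trace_sum]; simp_rw [horth]
    _ = 1 := by simp

variable [Fintype Y]

/-- Pairing a relation `∑ β(b,y) M_{b|y} = 0` with `M_{b|y}` under the trace isolates `β(b,y)`
from its own basis, while every other basis only contributes its total weight divided by `d`. -/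
theorem apply_eq_of_sum_smul_eq_zero (hd : d ≠ 0)
    (horth : ∀ y b b', (M y b * M y b').trace = if b = b' then 1 else 0)
    (hmub : ∀ y y', y ≠ y' → ∀ b b', (M y b * M y' b').trace = 1 / (d : ℂ))
    {β : B × Y → ℝ} (hβ : ∑ p, β p • M p.2 p.1 = 0) (hsum : ∑ p, β p = 0) (b : B) (y : Y) :
    β (b, y) = (∑ b', β (b', y)) / d := by
  classical
  have hrest : ∑ y' ∈ {y}ᶜ, ∑ b', β (b', y') = -∑ b', β (b', y) := by
    rw [Fintype.sum_prod_type_right, Fintype.sum_eq_add_sum_compl y] at hsum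
    linarith
  have h := congrArg (fun X => (X * M y b).trace) hβ
  simp only [sum_mul, smul_mul_assoc, trace_sum, trace_smul, Matrix.zero_mul, trace_zero,
    Complex.real_smul] at h
  rw [Fintype.sum_prod_type_right, Fintype.sum_eq_add_sum_compl y] at h
  have hown : ∑ b', (β (b', y) : ℂ) * (M y b' * M y b).trace = β (b, y) := by
    simp [horth]
  have hother : ∑ y' ∈ {y}ᶜ, ∑ b', (β (b', y') : ℂ) * (M y' b' * M y b).trace
      = ((∑ y' ∈ {y}ᶜ, ∑ b', β (b', y') : ℝ) : ℂ) / d := by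
    push_cast [sum_div]
    refine sum_congr rfl fun y' hy' => sum_congr rfl fun b' _ => ?_
    rw [hmub y' y (by simpa using hy'), mul_one_div]
  rw [hown, hother, hrest] at h
  have hdC : (d : ℂ) ≠ 0 := Nat.cast_ne_zero.mpr hd
  have hC : (β (b, y) : ℂ) = ((∑ b', β (b', y) : ℝ) : ℂ) / d := by
    field_simp at h ⊢
    push_cast at h ⊢
    linear_combination h
  exact_mod_cast hC

theorem sum_mul_eq_zero_of_sum_smul_noisyMulti_eq_zero (hd : d ≠ 0)
    (horth : ∀ y b b', (M y b * M y b').trace = if b = b' then 1 else 0)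
    (hmub : ∀ y y', y ≠ y' → ∀ b b', (M y b * M y' b').trace = 1 / (d : ℂ))
    (hcomplete : ∀ y, ∑ b, M y b = 1) {η : ℝ} (hη : η ≠ 0) {β : B × Y → ℝ}
    (hβ : ∑ p, β p • noisyMulti M η p = 0) {q : B × Y → ℝ} (hq : ∀ y, ∑ b, q (b, y) = 1) :
    ∑ p, β p * q p = 0 := by
  have hsum : ∑ p, β p = 0 := sum_eq_zero_of_sum_smul_eq_zero_of_trace_eq_one
    (trace_noisyMulti hd (trace_eq_one_of_orthonormal horth hcomplete)) hβ
  have hβM := sum_smul_eq_zero_of_sum_smul_noisyMulti_eq_zero hη hβ hsum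
  rw [sum_mul_eq_sum_of_apply_eq (apply_eq_of_sum_smul_eq_zero hd horth hmub hβM hsum) hq,
    ← sum_div, ← Fintype.sum_prod_type_right, hsum, zero_div]

end MutuallyUnbiased

theorem noisy_mub_classical_iff_jointly_measurable_general
    {d n : ℕ} (hd : 1 ≤ d)
    (M : Fin n → Fin d → Matrix (Fin d) (Fin d) ℂ)
    (horth : ∀ y : Fin n, ∀ b b' : Fin d,
      (M y b * M y b').trace = if b = b' then 1 else 0)
    (hmub : ∀ y y' : Fin n, y ≠ y' → ∀ b b' : Fin d,
      (M y b * M y' b').trace = 1 / (d : ℂ))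
    (hcomplete : ∀ y : Fin n, ∑ b : Fin d, M y b = 1)
    (η : ℝ) (hη : η ∈ Set.Ioc (0 : ℝ) 1) :
    IsClassicalMulti
        (fun p : Fin d × Fin n =>
          η • M p.2 p.1 + ((1 - η) * (d : ℝ)⁻¹) • (1 : Matrix (Fin d) (Fin d) ℂ)) ↔
      JointlyMeasurable
        (fun p : Fin d × Fin n =>
          η • M p.2 p.1 + ((1 - η) * (d : ℝ)⁻¹) • (1 : Matrix (Fin d) (Fin d) ℂ)) := by
  refine ⟨IsClassicalMulti.jointlyMeasurable, fun h => h.isClassicalMulti fun β hβ q hq => ?_⟩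
  exact sum_mul_eq_zero_of_sum_smul_noisyMulti_eq_zero (by omega) horth hmub hcomplete hη.1.ne'
    hβ hq

theorem noisy_mub_classical_iff_jointly_measurable
    {d n : ℕ} (hd : 1 ≤ d) (hn : 1 ≤ n)
    (M : Fin n → Fin d → Matrix (Fin d) (Fin d) ℂ)
    (hpsd : ∀ y b, (M y b).PosSemidef)
    (horth : ∀ y : Fin n, ∀ b b' : Fin d,
      (M y b * M y b').trace = if b = b' then 1 else 0)
    (hmub : ∀ y y' : Fin n, y ≠ y' → ∀ b b' : Fin d,
      (M y b * M y' b').trace = 1 / (d : ℂ))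
    (hcomplete : ∀ y : Fin n, ∑ b : Fin d, M y b = 1)
    (η : ℝ) (hη : η ∈ Set.Ioc (0 : ℝ) 1) :
    IsClassicalMulti
        (fun p : Fin d × Fin n =>
          η • M p.2 p.1 + ((1 - η) * (d : ℝ)⁻¹) • (1 : Matrix (Fin d) (Fin d) ℂ)) ↔
      JointlyMeasurable
        (fun p : Fin d × Fin n =>
          η • M p.2 p.1 + ((1 - η) * (d : ℝ)⁻¹) • (1 : Matrix (Fin d) (Fin d) ℂ)) :=
  noisy_mub_classical_iff_jointly_measurable_general hd M horth hmub hcomplete η hη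
end
end

section
/- Let d ≥ 2, let B be a finite set with |B| = k ≥ 1, let M : B → Matrix (Fin d) (Fin d) ℂ be a POVM (each M_b positive semidefinite, ∑_b M_b = 1) such that every M_b has rank at most one and Tr(M_b) = d/k, let Λ be a finite set, let D : Λ → B → ℝ with ∑_{b∈B} D_λ(b) = 1 for every λ, and let Λ₀ ∈ ℝ be such that Λ₀ • 1 − ∑_b D_λ(b) • M_b is positive semidefinite for every λ. If η ∈ ℝ with η ≤ 1 and there exist positive semidefinite matrices G_λ with ∑_λ D_λ(b) • G_λ = η • M_b + (1−η) • (Tr(M_b)/d) • 1 for every b, then η ≤ (k·Λ₀ − 1)/(d − 1). -/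
/-!
Summing the decomposition over `b` and using `∑_b D_λ(b) = 1` gives `∑_λ G_λ = 1`. Pairing
`∑_b D_λ(b) M_b ≤ Λ₀ • 1` with `G_λ ≥ 0` in the trace and summing over `λ` then bounds
`∑_b Tr(M_b N_b)` by `Λ₀ d`, where `N_b = ∑_λ D_λ(b) G_λ` is the noisy effect. For rank-one `M_b`
each term is `(η + (1 - η)/d) Tr(M_b)²`, so equal traces `d/k` turn the bound into
`(d/k)(η(d - 1) + 1) ≤ Λ₀ d`.
-/

open Matrix BigOperators
open scoped ComplexOrder

noncomputable section

theorem Finset.sq_sum_eq_sum_sq_of_mul_eq_zero {ι R : Type*} [CommSemiring R] (s : Finset ι)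
    (f : ι → R) (hf : ∀ i ∈ s, ∀ j ∈ s, i ≠ j → f i * f j = 0) :
    (∑ i ∈ s, f i) ^ 2 = ∑ i ∈ s, f i ^ 2 := by
  rw [sq, Finset.sum_mul_sum]
  refine Finset.sum_congr rfl fun i hi => ?_
  rw [Finset.sum_eq_single_of_mem i hi fun j hj hji => hf i hi j hj hji.symm, sq]

namespace Matrix

variable {n 𝕜 : Type*} [Fintype n] [DecidableEq n] [RCLike 𝕜]

theorem IsHermitian.trace_mul_self {A : Matrix n n 𝕜} (hA : A.IsHermitian) :
    (A * A).trace = ∑ i, (hA.eigenvalues i : 𝕜) ^ 2 := by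
  conv_lhs => rw [hA.spectral_theorem, ← map_mul, Unitary.conjStarAlgAut_apply, trace_mul_cycle,
    Unitary.coe_star_mul_self, one_mul, diagonal_mul_diagonal, trace_diagonal]
  simp [sq]

theorem IsHermitian.trace_mul_self_of_rank_le_one {A : Matrix n n 𝕜} (hA : A.IsHermitian)
    (hrank : A.rank ≤ 1) : (A * A).trace = A.trace ^ 2 := by
  have hcard : Fintype.card {i // hA.eigenvalues i ≠ 0} ≤ 1 :=
    hA.rank_eq_card_non_zero_eigs ▸ hrank
  rw [hA.trace_mul_self, hA.trace_eq_sum_eigenvalues,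
    Finset.sq_sum_eq_sum_sq_of_mul_eq_zero]
  intro i _ j _ hij
  by_contra h
  obtain ⟨hi, hj⟩ := mul_ne_zero_iff.mp h
  exact hij (congrArg Subtype.val (Fintype.card_le_one_iff.mp hcard
    ⟨i, by exact_mod_cast hi⟩ ⟨j, by exact_mod_cast hj⟩))

open scoped MatrixOrder in
theorem PosSemidef.trace_mul_nonneg {A B : Matrix n n 𝕜} (hA : A.PosSemidef) (hB : B.PosSemidef) :
    0 ≤ (A * B).trace := by
  obtain ⟨C, rfl⟩ := CStarAlgebra.nonneg_iff_eq_star_mul_self.mp hA.nonneg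
  rw [mul_assoc, trace_mul_comm, star_eq_conjTranspose]
  exact (hB.mul_mul_conjTranspose_same C).trace_nonneg

theorem trace_mul_le_of_posSemidef_smul_one_sub {A G : Matrix n n 𝕜} {c : ℝ}
    (hA : (c • 1 - A).PosSemidef) (hG : G.PosSemidef) : (A * G).trace ≤ c * G.trace := by
  have := hA.trace_mul_nonneg hG
  rwa [sub_mul, trace_sub, smul_mul_assoc, one_mul, trace_smul, RCLike.real_smul_eq_coe_mul,
    sub_nonneg] at this

def depolarize (η : ℝ) (A : Matrix n n ℂ) : Matrix n n ℂ :=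
  η • A + (1 - η) • ((A.trace / Fintype.card n) • 1)

theorem sum_depolarize {ι : Type*} [Fintype ι] (η : ℝ) (A : ι → Matrix n n ℂ) :
    ∑ i, depolarize η (A i) = depolarize η (∑ i, A i) := by
  simp only [depolarize, Finset.sum_add_distrib, ← Finset.smul_sum, ← Finset.sum_smul,
    ← Finset.sum_div, trace_sum]

theorem depolarize_one [Nonempty n] (η : ℝ) : depolarize η (1 : Matrix n n ℂ) = 1 := by
  simp only [depolarize, trace_one]
  rw [div_self (by exact_mod_cast Fintype.card_ne_zero), one_smul, ← add_smul, add_sub_cancel,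
    one_smul]

theorem trace_mul_depolarize_of_rank_le_one {A : Matrix n n ℂ} (hA : A.IsHermitian)
    (hrank : A.rank ≤ 1) (η : ℝ) :
    (A * depolarize η A).trace = (η + (1 - η) / Fintype.card n) * A.trace ^ 2 := by
  simp only [depolarize, mul_add, mul_smul_comm, mul_one, trace_add, trace_smul,
    hA.trace_mul_self_of_rank_le_one hrank, Complex.real_smul, smul_eq_mul]
  push_cast
  ring

end Matrix

section WhiteNoise

variable {n ι κ : Type*} [Fintype n] [DecidableEq n] [Fintype ι] [Fintype κ]

theorem sum_eq_sum_of_sum_smul_eq {E : Type*} [AddCommMonoid E] [Module ℝ E]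
    {D : ι → κ → ℝ} (hD : ∀ l, ∑ b, D l b = 1) {G : ι → E} {N : κ → E}
    (hN : ∀ b, ∑ l, D l b • G l = N b) : ∑ l, G l = ∑ b, N b := by
  simp only [← hN]
  rw [Finset.sum_comm]
  simp only [← Finset.sum_smul, hD, one_smul]

theorem sum_trace_mul_sum_smul_comm (D : ι → κ → ℝ) (M : κ → Matrix n n ℂ)
    (G : ι → Matrix n n ℂ) :
    ∑ l, ((∑ b, D l b • M b) * G l).trace = ∑ b, (M b * ∑ l, D l b • G l).trace := by
  simp only [Finset.sum_mul, Finset.mul_sum, trace_sum, smul_mul_assoc, mul_smul_comm, trace_smul]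
  exact Finset.sum_comm

theorem sum_trace_mul_depolarize_le [Nonempty n] {M : κ → Matrix n n ℂ} (hM : ∑ b, M b = 1)
    {D : ι → κ → ℝ} (hD : ∀ l, ∑ b, D l b = 1) {Λ₀ : ℝ}
    (hΛ₀ : ∀ l, (Λ₀ • (1 : Matrix n n ℂ) - ∑ b, D l b • M b).PosSemidef) {η : ℝ}
    {G : ι → Matrix n n ℂ} (hG : ∀ l, (G l).PosSemidef)
    (hdecomp : ∀ b, ∑ l, D l b • G l = depolarize η (M b)) :
    ∑ b, (M b * depolarize η (M b)).trace ≤ Λ₀ * Fintype.card n := by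
  have hGsum : ∑ l, G l = 1 := by
    rw [sum_eq_sum_of_sum_smul_eq hD hdecomp, sum_depolarize, hM, depolarize_one]
  calc ∑ b, (M b * depolarize η (M b)).trace
      = ∑ l, ((∑ b, D l b • M b) * G l).trace := by
        simp only [sum_trace_mul_sum_smul_comm, hdecomp]
    _ ≤ ∑ l, Λ₀ * (G l).trace :=
        Finset.sum_le_sum fun l _ => trace_mul_le_of_posSemidef_smul_one_sub (hΛ₀ l) (hG l)
    _ = Λ₀ * Fintype.card n := by
        rw [← Finset.mul_sum, ← trace_sum, hGsum, trace_one]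

end WhiteNoise

theorem rank_one_upper_bound_white_noise_robustness_general
    {d : ℕ} (hd : 2 ≤ d) {B Λ : Type*} [Fintype B] [Fintype Λ]
    (k : ℕ) (hk : 1 ≤ k) (hcard : Fintype.card B = k)
    (M : B → Matrix (Fin d) (Fin d) ℂ)
    (hMpsd : ∀ b, (M b).PosSemidef)
    (hMnorm : ∑ b : B, M b = 1)
    (hrank : ∀ b, (M b).rank ≤ 1)
    (htrace : ∀ b, (M b).trace = (d : ℂ) / (k : ℂ))
    (D : Λ → B → ℝ)
    (hDnorm : ∀ l, ∑ b : B, D l b = 1)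
    (Λ₀ : ℝ)
    (hΛ₀ : ∀ l : Λ,
      (Λ₀ • (1 : Matrix (Fin d) (Fin d) ℂ) - ∑ b : B, D l b • M b).PosSemidef)
    (η : ℝ)
    (G : Λ → Matrix (Fin d) (Fin d) ℂ)
    (hGpsd : ∀ l, (G l).PosSemidef)
    (hdecomp : ∀ b : B, ∑ l : Λ, D l b • G l =
      η • M b + (1 - η) • (((M b).trace / (d : ℂ)) • (1 : Matrix (Fin d) (Fin d) ℂ))) :
    η ≤ ((k : ℝ) * Λ₀ - 1) / ((d : ℝ) - 1) := by
  have : Nonempty (Fin d) := ⟨⟨0, by omega⟩⟩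
  have hbound := sum_trace_mul_depolarize_le hMnorm hDnorm hΛ₀ hGpsd (η := η)
    fun b => by rw [depolarize, Fintype.card_fin]; exact hdecomp b
  simp only [trace_mul_depolarize_of_rank_le_one (hMpsd _).isHermitian (hrank _), htrace,
    Finset.sum_const, Finset.card_univ, hcard, Fintype.card_fin, nsmul_eq_mul] at hbound
  have hreal : (k : ℝ) * ((η + (1 - η) / d) * (d / k) ^ 2) ≤ Λ₀ * d := by
    rw [← Complex.real_le_real]
    push_cast at hbound ⊢
    exact hbound
  have hd' : (2 : ℝ) ≤ d := by exact_mod_cast hd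
  have hk' : (1 : ℝ) ≤ k := by exact_mod_cast hk
  have key : η * (d - 1) + 1 ≤ k * Λ₀ := by
    field_simp at hreal
    nlinarith
  rw [le_div_iff₀ (by linarith)]
  linarith

theorem rank_one_upper_bound_white_noise_robustness
    {d : ℕ} (hd : 2 ≤ d) {B Λ : Type*} [Fintype B] [Fintype Λ]
    (k : ℕ) (hk : 1 ≤ k) (hcard : Fintype.card B = k)
    (M : B → Matrix (Fin d) (Fin d) ℂ)
    (hMpsd : ∀ b, (M b).PosSemidef)
    (hMnorm : ∑ b : B, M b = 1)
    (hrank : ∀ b, (M b).rank ≤ 1)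
    (htrace : ∀ b, (M b).trace = (d : ℂ) / (k : ℂ))
    (D : Λ → B → ℝ)
    (hDnorm : ∀ l, ∑ b : B, D l b = 1)
    (Λ₀ : ℝ)
    (hΛ₀ : ∀ l : Λ,
      (Λ₀ • (1 : Matrix (Fin d) (Fin d) ℂ) - ∑ b : B, D l b • M b).PosSemidef)
    (η : ℝ) (hη : η ≤ 1)
    (G : Λ → Matrix (Fin d) (Fin d) ℂ)
    (hGpsd : ∀ l, (G l).PosSemidef)
    (hdecomp : ∀ b : B, ∑ l : Λ, D l b • G l =
      η • M b + (1 - η) • (((M b).trace / (d : ℂ)) • (1 : Matrix (Fin d) (Fin d) ℂ))) :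
    η ≤ ((k : ℝ) * Λ₀ - 1) / ((d : ℝ) - 1) :=
  rank_one_upper_bound_white_noise_robustness_general hd k hk hcard M hMpsd hMnorm hrank htrace D
    hDnorm Λ₀ hΛ₀ η G hGpsd hdecomp
end
end
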